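/- Let x ∈ ℝ be continued-fraction normal and let M be a 2×2 integer matrix with determinant ±1. Then Mx = (αx + β)/(γx + δ) is continued-fraction normal. (The action of a determinant-±1 integer matrix alters only the head of the continued fraction expansion of an irrational number, leaving the tail unchanged.) -/

import Mathlib

/-!
Via the Euclidean algorithm on its first column, a matrix of determinant `±1` acts as a
composition of the maps `y ↦ y + q` (`q ∈ ℤ`), `y ↦ -y` and `y ↦ 1 / y`. On an irrational
number each of them changes only finitely many leading partial quotients, and the limiting
frequencies defining CF-normality do not see finitely many leading digits. A CF-normal
number is irrational: the Gauss orbit of a rational reaches `0`, after which the string `[1]`,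
whose cylinder has positive Gauss measure, never occurs.
-/

open MeasureTheory Filter

/-- The Gauss map `T(x) = 1/x - ⌊1/x⌋` (with `T 0 = 0`). -/
noncomputable def gauss (x : ℝ) : ℝ := if x = 0 then 0 else x⁻¹ - ⌊x⁻¹⌋

/-- `cfDigit x i` is the continued fraction partial quotient `a_{i+1}(x)`
of `x ∈ [0,1)`, namely `⌊1 / T^i x⌋`. -/
noncomputable def cfDigit (x : ℝ) (i : ℕ) : ℤ := ⌊(gauss^[i] x)⁻¹⌋

/-- The continued fraction cylinder set of the string `s = [c₁,…,c_n]`. -/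
def cyl (s : List ℤ) : Set ℝ :=
  {x | x ∈ Set.Ico (0 : ℝ) 1 ∧ ∀ i < s.length, cfDigit x i = s.getD i 0}

/-- The Gauss measure `μ(A) = ∫_A dx / ((log 2)(1+x))` on `[0,1)`. -/
noncomputable def gaussMeasure : Measure ℝ :=
  (volume.restrict (Set.Ico (0 : ℝ) 1)).withDensity
    (fun x => ENNReal.ofReal (1 / (Real.log 2 * (1 + x))))

open scoped Classical in
/-- The number of `i < n` with `T^i x` in the cylinder of `s`. -/
noncomputable def cfCount (x : ℝ) (s : List ℤ) (n : ℕ) : ℕ :=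
  ((Finset.range n).filter (fun i => gauss^[i] x ∈ cyl s)).card

/-- `x ∈ [0,1)` is CF-normal: every finite string of positive integers occurs in the
continued fraction expansion of `x` with limiting frequency equal to the Gauss
measure of its cylinder set. -/
noncomputable def cfNormal (x : ℝ) : Prop :=
  x ∈ Set.Ico (0 : ℝ) 1 ∧
  ∀ s : List ℤ, s ≠ [] → (∀ c ∈ s, 0 < c) →
    Tendsto (fun n : ℕ => (cfCount x s n : ℝ) / n) atTop
      (nhds (gaussMeasure (cyl s)).toReal)

/-- A real number `y` is CF-normal if its fractional part is CF-normal. -/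
noncomputable def cfNormalReal (y : ℝ) : Prop := cfNormal (Int.fract y)

/-- The action of an integer matrix on a real number by a linear fractional
transformation. -/
noncomputable def mobius (M : Matrix (Fin 2) (Fin 2) ℤ) (x : ℝ) : ℝ :=
  ((M 0 0 : ℝ) * x + (M 0 1 : ℝ)) / ((M 1 0 : ℝ) * x + (M 1 1 : ℝ))

open scoped Classical

lemma gauss_zero : gauss 0 = 0 := if_pos rfl

lemma gauss_of_ne_zero {x : ℝ} (hx : x ≠ 0) : gauss x = Int.fract x⁻¹ := if_neg hx

lemma gauss_mem_Ico (x : ℝ) : gauss x ∈ Set.Ico (0 : ℝ) 1 := by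
  by_cases hx : x = 0
  · simp [hx, gauss_zero]
  · rw [gauss_of_ne_zero hx]
    exact ⟨Int.fract_nonneg _, Int.fract_lt_one _⟩

lemma gauss_iterate_mem_Ico {x : ℝ} (hx : x ∈ Set.Ico (0 : ℝ) 1) :
    ∀ k, gauss^[k] x ∈ Set.Ico (0 : ℝ) 1
  | 0 => hx
  | k + 1 => by rw [Function.iterate_succ_apply']; exact gauss_mem_Ico _

lemma cfCount_succ (x : ℝ) (s : List ℤ) (n : ℕ) :
    cfCount x s (n + 1) = cfCount x s n + if gauss^[n] x ∈ cyl s then 1 else 0 := by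
  simp only [cfCount, Finset.card_filter, Finset.sum_range_succ]

lemma cfCount_succ' (x : ℝ) (s : List ℤ) (n : ℕ) :
    cfCount x s (n + 1) = cfCount (gauss x) s n + if x ∈ cyl s then 1 else 0 := by
  simp only [cfCount, Finset.card_filter, Finset.sum_range_succ', Function.iterate_succ_apply,
    Function.iterate_zero_apply]
  rfl

lemma abs_cfCount_sub_cfCount_gauss_le_one (x : ℝ) (s : List ℤ) (n : ℕ) :
    |(cfCount x s n : ℝ) - cfCount (gauss x) s n| ≤ 1 := by
  have h := (cfCount_succ x s n).symm.trans (cfCount_succ' x s n)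
  have hle : cfCount x s n ≤ cfCount (gauss x) s n + 1 ∧
      cfCount (gauss x) s n ≤ cfCount x s n + 1 := by
    split_ifs at h <;> omega
  rw [abs_sub_le_iff, sub_le_iff_le_add', sub_le_iff_le_add']
  exact_mod_cast hle

lemma tendsto_div_natCast_of_abs_sub_le {u v : ℕ → ℝ} {K L : ℝ} (huv : ∀ n, |u n - v n| ≤ K)
    (hu : Tendsto (fun n : ℕ => u n / n) atTop (nhds L)) :
    Tendsto (fun n : ℕ => v n / n) atTop (nhds L) := by
  have hdiff : Tendsto (fun n : ℕ => (u n - v n) / n) atTop (nhds 0) := by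
    refine squeeze_zero_norm (fun n => ?_) (tendsto_const_div_atTop_nhds_zero_nat K)
    rw [norm_div, Real.norm_eq_abs, Real.norm_natCast]
    exact div_le_div_of_nonneg_right (huv n) n.cast_nonneg
  simpa [sub_div] using hu.sub hdiff

lemma cfNormal_gauss_iff {x : ℝ} (hx : x ∈ Set.Ico (0 : ℝ) 1) :
    cfNormal (gauss x) ↔ cfNormal x := by
  have hK := abs_cfCount_sub_cfCount_gauss_le_one x
  refine ⟨fun ⟨_, h⟩ => ⟨hx, fun s hs hpos => ?_⟩,
    fun ⟨_, h⟩ => ⟨gauss_mem_Ico x, fun s hs hpos => ?_⟩⟩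
  · exact tendsto_div_natCast_of_abs_sub_le (fun n => by rw [abs_sub_comm]; exact hK s n)
      (h s hs hpos)
  · exact tendsto_div_natCast_of_abs_sub_le (hK s) (h s hs hpos)

lemma cfNormal_gauss_iterate_iff {x : ℝ} (hx : x ∈ Set.Ico (0 : ℝ) 1) :
    ∀ k, cfNormal (gauss^[k] x) ↔ cfNormal x
  | 0 => Iff.rfl
  | k + 1 => by
    rw [Function.iterate_succ_apply', cfNormal_gauss_iff (gauss_iterate_mem_Ico hx k)]
    exact cfNormal_gauss_iterate_iff hx k

lemma cfNormalReal_congr_of_gauss_iterate_eq {y z : ℝ} {m k : ℕ}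
    (h : gauss^[m] (Int.fract y) = gauss^[k] (Int.fract z)) :
    cfNormalReal y ↔ cfNormalReal z := by
  have hmem (w : ℝ) : Int.fract w ∈ Set.Ico (0 : ℝ) 1 := ⟨Int.fract_nonneg w, Int.fract_lt_one w⟩
  rw [cfNormalReal, cfNormalReal, ← cfNormal_gauss_iterate_iff (hmem y) m, h,
    cfNormal_gauss_iterate_iff (hmem z)]

lemma exists_gauss_iterate_ratCast_eq_zero {q : ℚ} (hq0 : 0 ≤ q) :
    ∃ N, gauss^[N] (q : ℝ) = 0 := by
  induction h : q.num.toNat using Nat.strong_induction_on generalizing q with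
  | _ n ih =>
  rcases hq0.eq_or_lt with rfl | hq
  · exact ⟨0, by simp⟩
  have hgauss : gauss (q : ℝ) = (Int.fract q⁻¹ : ℚ) := by
    rw [gauss_of_ne_zero (by exact_mod_cast hq.ne'), Rat.cast_fract, Rat.cast_inv]
  have hnum : (Int.fract q⁻¹).num.toNat < n := by
    have := Rat.fract_inv_num_lt_num_of_pos hq
    have := Rat.num_nonneg.mpr (Int.fract_nonneg q⁻¹)
    have := Rat.num_pos.mpr hq
    omega
  obtain ⟨N, hN⟩ := ih _ hnum (Int.fract_nonneg _) rfl
  exact ⟨N + 1, by rw [Function.iterate_succ_apply, hgauss, hN]⟩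

lemma Ioo_subset_cyl_one : Set.Ioo (1 / 2 : ℝ) 1 ⊆ cyl [1] := by
  rintro x ⟨hx1, hx2⟩
  have hx0 : 0 < x := by linarith
  refine ⟨⟨hx0.le, hx2⟩, fun i hi => ?_⟩
  obtain rfl : i = 0 := by simpa using hi
  have h1 : 1 < x⁻¹ := one_lt_inv₀ hx0 |>.mpr hx2
  have h2 : x⁻¹ < 2 := by rw [inv_lt_comm₀ hx0 two_pos]; linarith
  simp only [cfDigit, Function.iterate_zero_apply, List.getD_cons_zero, Int.floor_eq_iff]
  push_cast
  constructor <;> linarith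

instance isFiniteMeasure_gaussMeasure : IsFiniteMeasure gaussMeasure := by
  refine isFiniteMeasure_withDensity_ofReal
    (HasFiniteIntegral.of_bounded (C := 1 / Real.log 2) ?_)
  filter_upwards [ae_restrict_mem measurableSet_Ico] with x hx
  have hlog := Real.log_pos one_lt_two
  rw [Real.norm_of_nonneg (by have := hx.1; positivity)]
  gcongr
  nlinarith [hx.1]

lemma gaussMeasure_cyl_one_pos : 0 < (gaussMeasure (cyl [1])).toReal := by
  refine ENNReal.toReal_pos (fun h => ?_) (measure_ne_top _ _)
  have hzero := measure_mono_null Ioo_subset_cyl_one h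
  rw [gaussMeasure, withDensity_apply_eq_zero' (by fun_prop),
    Measure.restrict_apply' measurableSet_Ico] at hzero
  refine (Measure.measure_Ioo_pos (a := (1 / 2 : ℝ)) (b := 1) volume |>.mpr (by norm_num)).ne' ?_
  refine measure_mono_null (fun x hx => ?_) hzero
  refine ⟨⟨?_, hx⟩, by linarith [hx.1], hx.2⟩
  have hlog := Real.log_pos one_lt_two
  have := hx.1
  simp only [Set.mem_ofPred_eq, ne_eq, ENNReal.ofReal_eq_zero, not_le]
  positivity

lemma not_cfNormal_zero : ¬ cfNormal 0 := by
  rintro ⟨-, h⟩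
  -- the first digit of `0` is the junk value `⌊0⁻¹⌋ = 0`
  have hcount (n : ℕ) : cfCount 0 [1] n = 0 := by
    refine Finset.card_eq_zero.mpr (Finset.filter_false_of_mem fun i _ hi => ?_)
    have := hi.2 0 (by simp)
    simp [Function.iterate_fixed gauss_zero, cfDigit] at this
  have hlim := h [1] (by simp) (by simp)
  simp only [hcount, Nat.cast_zero, zero_div] at hlim
  exact gaussMeasure_cyl_one_pos.ne (tendsto_nhds_unique tendsto_const_nhds hlim)

lemma irrational_of_cfNormalReal {x : ℝ} (hx : cfNormalReal x) : Irrational x := by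
  rintro ⟨q, rfl⟩
  rw [cfNormalReal, ← Rat.cast_fract] at hx
  obtain ⟨N, hN⟩ := exists_gauss_iterate_ratCast_eq_zero (Int.fract_nonneg q)
  have hmem : ((Int.fract q : ℚ) : ℝ) ∈ Set.Ico (0 : ℝ) 1 := by
    rw [Rat.cast_fract]; exact ⟨Int.fract_nonneg _, Int.fract_lt_one _⟩
  rw [← cfNormal_gauss_iterate_iff hmem N, hN] at hx
  exact not_cfNormal_zero hx

/-- If `t = [0; a₁, a₂, …]` with `a₁ ≥ 2`, then `1 - t = [0; 1, a₁ - 1, a₂, …]`. -/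
lemma gauss_iterate_two_one_sub {t : ℝ} (ht0 : 0 < t) (ht : t < 1 / 2) :
    gauss^[2] (1 - t) = gauss t := by
  have h1t : 0 < 1 - t := by linarith
  have hfloor : ⌊(1 - t)⁻¹⌋ = 1 := by
    rw [Int.floor_eq_iff, Int.cast_one, one_add_one_eq_two, le_inv_comm₀ one_pos h1t,
      inv_lt_comm₀ h1t two_pos]
    constructor <;> linarith
  have hgauss : gauss (1 - t) = t / (1 - t) := by
    rw [gauss_of_ne_zero h1t.ne', ← Int.self_sub_floor, hfloor]
    field_simp
    ring
  have hinv : (t / (1 - t))⁻¹ = t⁻¹ - (1 : ℤ) := by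
    field_simp
    push_cast
    ring
  rw [Function.iterate_succ_apply, Function.iterate_one, hgauss,
    gauss_of_ne_zero (div_pos ht0 h1t).ne', hinv, Int.fract_sub_intCast,
    gauss_of_ne_zero ht0.ne']

lemma cfNormalReal_add_intCast_iff (y : ℝ) (q : ℤ) : cfNormalReal (y + q) ↔ cfNormalReal y := by
  rw [cfNormalReal, cfNormalReal, Int.fract_add_intCast]

lemma cfNormalReal_neg {y : ℝ} (hy : cfNormalReal y) : cfNormalReal (-y) := by
  have hirr := (irrational_of_cfNormalReal hy).sub_intCast ⌊y⌋
  rw [Int.self_sub_floor] at hirr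
  set t := Int.fract y
  have ht0 : 0 < t := (Int.fract_nonneg y).lt_of_ne' hirr.ne_zero
  have hhalf : t ≠ 1 / 2 := fun h => hirr ⟨1 / 2, by rw [h]; norm_num⟩
  have hneg : Int.fract (-y) = 1 - t := Int.fract_neg hirr.ne_zero
  rcases hhalf.lt_or_gt with hlt | hgt
  · refine (cfNormalReal_congr_of_gauss_iterate_eq (m := 2) (k := 1) ?_).mpr hy
    rw [hneg, gauss_iterate_two_one_sub ht0 hlt, Function.iterate_one]
  · have h := gauss_iterate_two_one_sub (t := 1 - t) (by linarith [Int.fract_lt_one y])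
      (by linarith)
    rw [sub_sub_cancel] at h
    refine (cfNormalReal_congr_of_gauss_iterate_eq (m := 1) (k := 2) ?_).mpr hy
    rw [hneg, h, Function.iterate_one]

lemma cfNormalReal_inv_of_pos {y : ℝ} (hy : cfNormalReal y) (hpos : 0 < y) :
    cfNormalReal y⁻¹ := by
  have hne : y ≠ 1 := fun h => (irrational_of_cfNormalReal hy).ne_one h
  rcases hne.lt_or_gt with hlt | hgt
  · have hfract : Int.fract y = y := Int.fract_eq_self.mpr ⟨hpos.le, hlt⟩
    refine (cfNormalReal_congr_of_gauss_iterate_eq (m := 0) (k := 1) ?_).mpr hy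
    rw [Function.iterate_zero_apply, Function.iterate_one, hfract, gauss_of_ne_zero hpos.ne']
  · have hfract : Int.fract y⁻¹ = y⁻¹ :=
      Int.fract_eq_self.mpr ⟨(inv_pos.mpr hpos).le, inv_lt_one_of_one_lt₀ hgt⟩
    refine (cfNormalReal_congr_of_gauss_iterate_eq (m := 1) (k := 0) ?_).mpr hy
    rw [Function.iterate_zero_apply, Function.iterate_one, hfract,
      gauss_of_ne_zero (inv_pos.mpr hpos).ne', inv_inv]

lemma cfNormalReal_inv {y : ℝ} (hy : cfNormalReal y) : cfNormalReal y⁻¹ := by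
  rcases (irrational_of_cfNormalReal hy).ne_zero.lt_or_gt with hneg | hpos
  · have h := cfNormalReal_neg (cfNormalReal_inv_of_pos (cfNormalReal_neg hy) (neg_pos.mpr hneg))
    rwa [inv_neg, neg_neg] at h
  · exact cfNormalReal_inv_of_pos hy hpos

lemma cfNormalReal_intCast_mul {e : ℤ} (he : IsUnit e) {y : ℝ} (hy : cfNormalReal y) :
    cfNormalReal (e * y) := by
  rcases Int.isUnit_iff.mp he with rfl | rfl
  · simpa using hy
  · simpa using cfNormalReal_neg hy

/-- One step of the Euclidean algorithm on the first column, `M = !![q, 1; 1, 0] * euclidStep M`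
with `q = M 0 0 / M 1 0`. -/
def euclidStep (M : Matrix (Fin 2) (Fin 2) ℤ) : Matrix (Fin 2) (Fin 2) ℤ :=
  !![M 1 0, M 1 1; M 0 0 % M 1 0, M 0 1 - M 0 0 / M 1 0 * M 1 1]

lemma det_euclidStep (M : Matrix (Fin 2) (Fin 2) ℤ) : (euclidStep M).det = -M.det := by
  rw [euclidStep, Matrix.det_fin_two_of, Matrix.det_fin_two, Int.emod_def]
  ring

lemma natAbs_euclidStep_lt {M : Matrix (Fin 2) (Fin 2) ℤ} (hc : M 1 0 ≠ 0) :
    (euclidStep M 1 0).natAbs < (M 1 0).natAbs := by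
  simpa [euclidStep, Int.natAbs_abs] using
    Int.natAbs_lt_natAbs_of_nonneg_of_lt (Int.emod_nonneg (M 0 0) hc) (Int.emod_lt (M 0 0) hc)

lemma mobius_eq_inv_mobius_euclidStep_add {M : Matrix (Fin 2) (Fin 2) ℤ} (hc : M 1 0 ≠ 0)
    {x : ℝ} (hx : Irrational x) :
    mobius M x = (mobius (euclidStep M) x)⁻¹ + (M 0 0 / M 1 0 : ℤ) := by
  have hden : (M 1 0 : ℝ) * x + M 1 1 ≠ 0 := ((hx.intCast_mul hc).add_intCast _).ne_zero
  have hdiv : (M 0 0 : ℝ) = (M 0 0 / M 1 0 : ℤ) * M 1 0 + (M 0 0 % M 1 0 : ℤ) := by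
    exact_mod_cast (Int.ediv_mul_add_emod (M 0 0) (M 1 0)).symm
  simp only [mobius, euclidStep, Matrix.of_apply, Matrix.cons_val', Matrix.cons_val_zero,
    Matrix.cons_val_one, Matrix.empty_val', Matrix.cons_val_fin_one, inv_div]
  rw [hdiv]
  field_simp
  push_cast
  ring

lemma mobius_of_lower_left_eq_zero {M : Matrix (Fin 2) (Fin 2) ℤ} (hc : M 1 0 = 0)
    (hd : IsUnit (M 1 1)) (x : ℝ) : mobius M x = M 1 1 * (M 0 0 * x + M 0 1) := by
  rcases Int.isUnit_iff.mp hd with hd | hd <;> simp [mobius, hc, hd, div_neg]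

theorem cfNormalReal_mobius {M : Matrix (Fin 2) (Fin 2) ℤ} (hM : IsUnit M.det) {x : ℝ}
    (hx : cfNormalReal x) : cfNormalReal (mobius M x) := by
  induction h : (M 1 0).natAbs using Nat.strong_induction_on generalizing M with
  | _ n ih =>
  by_cases hc : M 1 0 = 0
  · rw [Matrix.det_fin_two, hc, mul_zero, sub_zero, IsUnit.mul_iff] at hM
    rw [mobius_of_lower_left_eq_zero hc hM.2]
    refine cfNormalReal_intCast_mul hM.2 ?_
    exact (cfNormalReal_add_intCast_iff _ _).mpr (cfNormalReal_intCast_mul hM.1 hx)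
  · rw [mobius_eq_inv_mobius_euclidStep_add hc (irrational_of_cfNormalReal hx),
      cfNormalReal_add_intCast_iff]
    refine cfNormalReal_inv (ih _ (h ▸ natAbs_euclidStep_lt hc) ?_ rfl)
    rw [det_euclidStep]
    exact hM.neg

/-- Determinant-`±1` integer matrices preserve CF-normality: if `x` is CF-normal and
`det M = ±1`, then `Mx = (αx+β)/(γx+δ)` is CF-normal. -/
theorem cfNormal_GL2_action (x : ℝ) (hx : cfNormalReal x)
    (M : Matrix (Fin 2) (Fin 2) ℤ) (hdet : M.det = 1 ∨ M.det = -1) :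
    cfNormalReal (mobius M x) :=
  cfNormalReal_mobius (Int.isUnit_iff.mpr hdet) hx
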